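/- Let p be an odd prime, R = 𝔽_p[π] the polynomial ring in one variable π over 𝔽_p, and m an even integer with m ≥ 4. In the free Lie algebra over R on generators ξ₁,…,ξ_m, the sequence ρ₁ = π·ξ₁ + [ξ₁,ξ₂], ρ₂ = π·ξ₂ + [ξ₂,ξ₃], …, ρ_{m−1} = π·ξ_{m−1} + [ξ_{m−1},ξ_m], ρ_m = π·ξ_m + [ξ_m,ξ₁] is strongly free (over R). These are the initial forms of the pro-p relators x₁^p[x₁,x₂], x₂^p[x₂,x₃], …, x_{m−1}^p[x_{m−1},x_m], x_m^p[x_m,x₁]. -/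

import Mathlib

open LieSubmodule

section StronglyFree

variable (K : Type*) [CommRing K] (L : Type*) [LieRing L] [LieAlgebra K L]

attribute [local instance 100] LieRing.ofAssociativeRing

/-- The derived ideal `[I, I]` of a Lie ideal `I`, viewed as a Lie submodule (for the
ambient `L`-action) of `I`. -/
def derivedLieSubmodule (I : LieIdeal K L) : LieSubmodule K L I :=
  lieSpan K L {z : I | ∃ x y : I, (z : L) = ⁅(x : L), (y : L)⁆}

/-- The abelianization `I/[I,I]` of a Lie ideal `I`. -/
abbrev LieIdealAb (I : LieIdeal K L) : Type _ := I ⧸ derivedLieSubmodule K L I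

theorem lie_mk_eq_zero (I : LieIdeal K L) {x : L} (hx : x ∈ I) (m : I) :
    ⁅x, (LieSubmodule.Quotient.mk (N := derivedLieSubmodule K L I) m)⁆ = 0 := by
  have : ⁅x, (LieSubmodule.Quotient.mk (N := derivedLieSubmodule K L I) m)⁆
      = LieSubmodule.Quotient.mk (N := derivedLieSubmodule K L I) ⁅x, m⁆ := rfl
  rw [this, LieSubmodule.Quotient.mk_eq_zero']
  exact subset_lieSpan ⟨⟨x, hx⟩, m, rfl⟩

/-- The action of the quotient Lie algebra `L ⧸ I` on the abelianization `I/[I,I]`. -/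
noncomputable def abelianizationAction (I : LieIdeal K L) :
    (L ⧸ I) →ₗ⁅K⁆ Module.End K (LieIdealAb K L I) :=
  { (Submodule.liftQ I.toSubmodule
      (LieModule.toEnd K L (LieIdealAb K L I)).toLinearMap (by
        intro x hx
        ext m
        induction m using Quotient.inductionOn' with
        | h m =>
          exact lie_mk_eq_zero K L I hx m)) with
    map_lie' := by
      intro x y
      induction x using Quotient.inductionOn' with
      | h x =>
      induction y using Quotient.inductionOn' with
      | h y =>
        have hx : (Quotient.mk'' x : L ⧸ I) = LieSubmodule.Quotient.mk (N := I) x := rfl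
        have hy : (Quotient.mk'' y : L ⧸ I) = LieSubmodule.Quotient.mk (N := I) y := rfl
        simp only [hx, hy, ← LieSubmodule.Quotient.mk_bracket]
        change (LieModule.toEnd K L (LieIdealAb K L I)) ⁅x, y⁆
          = ⁅(LieModule.toEnd K L (LieIdealAb K L I)) x,
              (LieModule.toEnd K L (LieIdealAb K L I)) y⁆
        exact LieHom.map_lie _ x y }

/-- `I/[I,I]` as a module over the universal enveloping algebra of `L ⧸ I`. -/
noncomputable instance lieIdealAbModule (I : LieIdeal K L) :
    Module (UniversalEnvelopingAlgebra K (L ⧸ I)) (LieIdealAb K L I) :=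
  Module.compHom (LieIdealAb K L I)
    (UniversalEnvelopingAlgebra.lift K (abelianizationAction K L I) :
      UniversalEnvelopingAlgebra K (L ⧸ I) →ₐ[K]
        Module.End K (LieIdealAb K L I)).toRingHom

/-- A family `ρ` of elements of a Lie algebra `L` over `K` is *strongly free* if,
denoting by `𝔯` the Lie ideal generated by the `ρ i`, by `𝔤 = L ⧸ 𝔯` and by `U𝔤` the
universal enveloping algebra of `𝔤`, the `K`-module `U𝔤` is torsion free and the
abelianization `𝔯/[𝔯,𝔯]` is a free `U𝔤`-module with basis the images of the `ρ i`. -/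
def IsStronglyFree {ι : Type*} (ρ : ι → L) : Prop :=
  Submodule.torsion K (UniversalEnvelopingAlgebra K (L ⧸ lieSpan K L (Set.range ρ))) = ⊥ ∧
  ∃ b : Module.Basis ι (UniversalEnvelopingAlgebra K (L ⧸ lieSpan K L (Set.range ρ)))
      (LieIdealAb K L (lieSpan K L (Set.range ρ))),
    ∀ i, b i = LieSubmodule.Quotient.mk
      (⟨ρ i, subset_lieSpan (Set.mem_range_self i)⟩ : lieSpan K L (Set.range ρ))

end StronglyFree

/-!
Call a letter `k` odd when `P k`: the permutation `σ` swaps odd and even letters and has no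
cycle of length `2` (for `finRotate m`, `m` even, take the parity of `k`). Orient each relator
so that an odd letter moves to the right past its two even neighbours:
`x_k x_{σk} = x_{σk} x_k - π x_k` for odd `k`, and `x_{σk} x_k = x_k x_{σk} + π x_k` for even `k`. This rewriting turns the free
associative algebra `K⟨x⟩` into a `U𝔤`-module in which `u ↦ u • 1` has a left inverse, so `U𝔤`
embeds into the free `K`-module `K⟨x⟩` and is torsion free.

Right Fox derivatives, read in `U𝔤`, induce a `U𝔤`-linear map `𝔯/[𝔯,𝔯] → U𝔤^ι` sending `ρ_k`
to `e_k (π - x_{σk}) + e_{σk} x_k`. Its coordinate at `σk` for odd `k` is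
`c_{σk} (π - x_{σσk}) + c_k x_k`; mapped to `K⟨x⟩`, an identity `π a - a x_j + b x_l = 0` with
`j ≠ l` forces `a = b = 0` by looking at a word of maximal length in `a`. So the images of the
`ρ_k` are linearly independent, and they always generate `𝔯/[𝔯,𝔯]`.
-/

namespace LieIdeal

variable {K L L' : Type*} [CommRing K] [LieRing L] [LieAlgebra K L] [LieRing L'] [LieAlgebra K L']
variable (I : LieIdeal K L)

def quotientMk : L →ₗ⁅K⁆ L ⧸ I :=
  { I.toSubmodule.mkQ with map_lie' := rfl }

@[simp]
theorem quotientMk_apply (z : L) : I.quotientMk z = LieSubmodule.Quotient.mk z :=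
  rfl

def quotientLift (f : L →ₗ⁅K⁆ L') (h : I ≤ f.ker) : L ⧸ I →ₗ⁅K⁆ L' :=
  { I.toSubmodule.liftQ f.toLinearMap fun _ hz => f.mem_ker.mp (h hz) with
    map_lie' := by
      rintro ⟨x⟩ ⟨y⟩
      exact f.map_lie x y }

@[simp]
theorem quotientLift_mk (f : L →ₗ⁅K⁆ L') (h : I ≤ f.ker) (z : L) :
    I.quotientLift f h (LieSubmodule.Quotient.mk z) = f z :=
  rfl

end LieIdeal

theorem UniversalEnvelopingAlgebra.adjoin_range_ι (R L : Type*) [CommRing R] [LieRing L]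
    [LieAlgebra R L] :
    Algebra.adjoin R (Set.range (ι R : L → UniversalEnvelopingAlgebra R L)) = ⊤ := by
  rw [← (mkAlgHom R L).range_eq_top.mpr (RingCon.mkₐ_surjective (α := R) _), ← Algebra.map_top,
    ← TensorAlgebra.adjoin_range_ι, AlgHom.map_adjoin, ← Set.range_comp]
  rfl

theorem Submodule.torsion_eq_bot_of_isTorsionFree {R M : Type*} [CommRing R] [AddCommGroup M]
    [Module R M] [Module.IsTorsionFree R M] : Submodule.torsion R M = ⊥ :=
  eq_bot_iff.mpr fun x hx => by
    obtain ⟨a, ha⟩ := (Submodule.mem_torsion_iff x).mp hx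
    exact (isRegular_iff_mem_nonZeroDivisors.mpr a.2).isSMulRegular (ha.trans (smul_zero _).symm)

namespace LieIdealAb

variable {K L : Type*} [CommRing K] [LieRing L] [LieAlgebra K L] {I : LieIdeal K L}

theorem ι_smul_mk (z : L) (r : I) :
    UniversalEnvelopingAlgebra.ι K (LieSubmodule.Quotient.mk z : L ⧸ I) •
      (LieSubmodule.Quotient.mk r : LieIdealAb K L I) = LieSubmodule.Quotient.mk ⁅z, r⁆ := by
  change UniversalEnvelopingAlgebra.lift K (abelianizationAction K L I)
    (UniversalEnvelopingAlgebra.ι K _) _ = _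
  rw [UniversalEnvelopingAlgebra.lift_ι_apply]
  rfl

theorem algebraMap_smul (c : K) (w : LieIdealAb K L I) :
    algebraMap K (UniversalEnvelopingAlgebra K (L ⧸ I)) c • w = c • w := by
  change UniversalEnvelopingAlgebra.lift K (abelianizationAction K L I) _ w = _
  rw [AlgHom.commutes, Module.algebraMap_end_apply]

instance : IsScalarTower K (UniversalEnvelopingAlgebra K (L ⧸ I)) (LieIdealAb K L I) :=
  .of_algebraMap_smul algebraMap_smul

theorem span_range_mk_eq_top {ι : Type*} (ρ : ι → L) :
    Submodule.span (UniversalEnvelopingAlgebra K (L ⧸ lieSpan K L (Set.range ρ)))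
      (Set.range fun i => (LieSubmodule.Quotient.mk ⟨ρ i, subset_lieSpan (Set.mem_range_self i)⟩ :
        LieIdealAb K L (lieSpan K L (Set.range ρ)))) = ⊤ := by
  refine Submodule.eq_top_iff'.mpr fun w => ?_
  induction w using Quotient.inductionOn' with | h r => ?_
  obtain ⟨z, hz⟩ := r
  induction hz using lieSpan_induction with
  | mem z hz =>
    obtain ⟨i, rfl⟩ := hz
    exact Submodule.subset_span ⟨i, rfl⟩
  | zero => exact zero_mem _
  | add x y _ _ hx hy => exact add_mem hx hy
  | smul c x _ hx => exact Submodule.smul_of_tower_mem _ c hx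
  | lie x y _ hy =>
    have h := Submodule.smul_mem _ (UniversalEnvelopingAlgebra.ι K (LieSubmodule.Quotient.mk x)) hy
    rwa [Quotient.is_quotient_mk, ι_smul_mk] at h

variable {M : Type*} [AddCommGroup M] [Module K M] [Module (UniversalEnvelopingAlgebra K (L ⧸ I)) M]

theorem derivedLieSubmodule_le_ker (f : I →ₗ[K] M)
    (hf : ∀ (z : L) (r : I), f ⁅z, r⁆ =
      UniversalEnvelopingAlgebra.ι K (LieSubmodule.Quotient.mk z : L ⧸ I) • f r) :
    (derivedLieSubmodule K L I).toSubmodule ≤ LinearMap.ker f := by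
  intro d hd
  induction hd using lieSpan_induction with
  | mem d hd =>
    obtain ⟨x, y, hd⟩ := hd
    rw [LinearMap.mem_ker, show d = ⁅(x : L), y⁆ from Subtype.ext hd, hf,
      (LieSubmodule.Quotient.mk_eq_zero' (N := I)).mpr x.2, map_zero, zero_smul]
  | zero => exact zero_mem _
  | add x y _ _ hx hy => exact add_mem hx hy
  | smul c x _ hx => exact Submodule.smul_mem _ c hx
  | lie z d _ hd => rw [LinearMap.mem_ker, hf, LinearMap.mem_ker.mp hd, smul_zero]

variable [IsScalarTower K (UniversalEnvelopingAlgebra K (L ⧸ I)) M]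

theorem map_smul_of_map_mk_lie (f : LieIdealAb K L I →ₗ[K] M)
    (hf : ∀ (z : L) (r : I), f (LieSubmodule.Quotient.mk ⁅z, r⁆) =
      UniversalEnvelopingAlgebra.ι K (LieSubmodule.Quotient.mk z : L ⧸ I) •
        f (LieSubmodule.Quotient.mk r))
    (u : UniversalEnvelopingAlgebra K (L ⧸ I)) (w : LieIdealAb K L I) : f (u • w) = u • f w := by
  have hu : u ∈ Algebra.adjoin K (Set.range (UniversalEnvelopingAlgebra.ι K)) := by
    rw [UniversalEnvelopingAlgebra.adjoin_range_ι]; trivial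
  induction hu using Algebra.adjoin_induction generalizing w with
  | mem u hu =>
    obtain ⟨z, rfl⟩ := hu
    induction z using Quotient.inductionOn' with | h z => ?_
    induction w using Quotient.inductionOn' with | h r => ?_
    exact (congrArg f (ι_smul_mk z r)).trans (hf z r)
  | algebraMap c => rw [_root_.algebraMap_smul, _root_.algebraMap_smul, map_smul]
  | add u v _ _ hu hv => rw [add_smul, map_add, hu, hv, add_smul]
  | mul u v _ _ hu hv => rw [mul_smul, hu, hv, mul_smul]

noncomputable def lift (f : I →ₗ[K] M)
    (hf : ∀ (z : L) (r : I), f ⁅z, r⁆ =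
      UniversalEnvelopingAlgebra.ι K (LieSubmodule.Quotient.mk z : L ⧸ I) • f r) :
    LieIdealAb K L I →ₗ[UniversalEnvelopingAlgebra K (L ⧸ I)] M :=
  { (derivedLieSubmodule K L I).toSubmodule.liftQ f (derivedLieSubmodule_le_ker f hf) with
    map_smul' := map_smul_of_map_mk_lie _ hf }

theorem lift_mk (f : I →ₗ[K] M)
    (hf : ∀ (z : L) (r : I), f ⁅z, r⁆ =
      UniversalEnvelopingAlgebra.ι K (LieSubmodule.Quotient.mk z : L ⧸ I) • f r) (r : I) :
    lift f hf (LieSubmodule.Quotient.mk r) = f r :=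
  rfl

end LieIdealAb

attribute [local instance 100] LieRing.ofAssociativeRing

namespace FreeMonoidAlgebra

open MonoidAlgebra

variable {K ι : Type*} [CommRing K]

noncomputable abbrev gen (a : ι) : K[FreeMonoid ι] := single (FreeMonoid.of a) 1

theorem adjoin_range_gen : Algebra.adjoin K (Set.range (gen : ι → K[FreeMonoid ι])) = ⊤ := by
  have h : Set.range (gen : ι → K[FreeMonoid ι]) =
      FreeAlgebra.equivMonoidAlgebraFreeMonoid '' Set.range (FreeAlgebra.ι K) := by
    rw [← Set.range_comp]
    congr 1
    funext a
    simp [FreeAlgebra.equivMonoidAlgebraFreeMonoid]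
  rw [h, ← AlgEquiv.coe_toAlgHom, Algebra.adjoin_image, FreeAlgebra.adjoin_range_ι,
    Algebra.map_top, AlgHom.range_eq_top]
  exact AlgEquiv.surjective _

@[elab_as_elim]
theorem induction_gen {motive : K[FreeMonoid ι] → Prop}
    (algebraMap : ∀ c, motive (algebraMap K _ c)) (gen : ∀ a, motive (gen a))
    (add : ∀ t u, motive t → motive u → motive (t + u))
    (mul : ∀ t u, motive t → motive u → motive (t * u)) (t : K[FreeMonoid ι]) : motive t := by
  have ht : t ∈ Algebra.adjoin K (Set.range (FreeMonoidAlgebra.gen : ι → K[FreeMonoid ι])) := by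
    rw [adjoin_range_gen]; trivial
  induction ht using Algebra.adjoin_induction with
  | mem t ht => obtain ⟨a, rfl⟩ := ht; exact gen a
  | algebraMap c => exact algebraMap c
  | add t u _ _ ht hu => exact add t u ht hu
  | mul t u _ _ ht hu => exact mul t u ht hu

theorem single_mul_gen (w : FreeMonoid ι) (c : K) (a : ι) :
    single w c * gen a = single (w * FreeMonoid.of a) c := by
  rw [single_mul_single, mul_one]

theorem gen_mul_single (a : ι) (w : FreeMonoid ι) (c : K) :
    gen a * single w c = single (FreeMonoid.of a * w) c := by
  rw [single_mul_single, one_mul]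

theorem eq_zero_of_coeff_eq_mul_coeff_mul_of {π : K} {a : K[FreeMonoid ι]} {j : ι}
    (h : ∀ w, a.coeff w = π * a.coeff (w * FreeMonoid.of j)) : a = 0 := by
  by_contra ha
  obtain ⟨w, hw, hmax⟩ := a.coeff.support.exists_max_image FreeMonoid.length
    (Finsupp.support_nonempty_iff.mpr (coeff_eq_zero.not.mpr ha))
  have hwj : w * FreeMonoid.of j ∈ a.coeff.support := by
    rw [Finsupp.mem_support_iff] at hw ⊢
    exact fun h0 => hw (by rw [h, h0, mul_zero])
  have := hmax _ hwj
  rw [FreeMonoid.length_mul, FreeMonoid.length_of] at this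
  omega

theorem eq_zero_of_smul_sub_mul_gen_add_mul_gen {π : K} {a b : K[FreeMonoid ι]} {j l : ι}
    (hjl : j ≠ l) (h : π • a - a * gen j + b * gen l = 0) : a = 0 ∧ b = 0 := by
  have ha : a = 0 := by
    refine eq_zero_of_coeff_eq_mul_coeff_mul_of (π := π) (j := j) fun w => ?_
    have hw := congrArg (fun t => t.coeff (w * FreeMonoid.of j)) h
    have hb : (b * gen l).coeff (w * FreeMonoid.of j) = 0 :=
      coeff_mul_single_of_forall_mul_ne _ _ fun d hd => hjl <| by
        simpa using (congrArg (fun x : FreeMonoid ι => x.toList.getLast?) hd).symm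
    simp only [coeff_add, coeff_sub, coeff_smul, Finsupp.add_apply, Finsupp.sub_apply,
      Finsupp.smul_apply, coeff_mul_single_mul, hb, smul_eq_mul, mul_one, add_zero, coeff_zero,
      Finsupp.coe_zero, Pi.zero_apply] at hw
    exact (sub_eq_zero.mp hw).symm
  subst ha
  refine ⟨rfl, coeff_inj.mp (Finsupp.ext fun w => ?_)⟩
  simpa using congrArg (fun t => t.coeff (w * FreeMonoid.of l)) h

variable (K ι) in
noncomputable def augmentation : K[FreeMonoid ι] →ₐ[K] K :=
  MonoidAlgebra.lift K K (FreeMonoid ι) (FreeMonoid.lift fun _ => 0)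

@[simp]
theorem augmentation_gen (a : ι) : augmentation K ι (gen a) = 0 := by
  simp [augmentation]

variable (K ι) in
noncomputable def ofFreeLie : FreeLieAlgebra K ι →ₗ⁅K⁆ K[FreeMonoid ι] :=
  FreeLieAlgebra.lift K gen

@[simp]
theorem ofFreeLie_of (a : ι) : ofFreeLie K ι (FreeLieAlgebra.of K a) = gen a :=
  FreeLieAlgebra.lift_of_apply _ _

@[simp]
theorem augmentation_ofFreeLie (z : FreeLieAlgebra K ι) :
    augmentation K ι (ofFreeLie K ι z) = 0 := by
  have h : (augmentation K ι).toLieHom.comp (ofFreeLie K ι) = 0 :=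
    FreeLieAlgebra.hom_ext fun a => by simp
  exact LieHom.congr_fun h z

section Fox

variable [DecidableEq ι]

noncomputable def foxWord (i : ι) (w : FreeMonoid ι) : K[FreeMonoid ι] :=
  if w.toList.getLast? = some i then single (FreeMonoid.ofList w.toList.dropLast) 1 else 0

noncomputable def fox (i : ι) : K[FreeMonoid ι] →ₗ[K] K[FreeMonoid ι] :=
  Finsupp.linearCombination K (foxWord i) ∘ₗ (coeffLinearEquiv K).toLinearMap

theorem fox_single (i : ι) (w : FreeMonoid ι) (c : K) : fox i (single w c) = c • foxWord i w :=
  Finsupp.linearCombination_single _ _ _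

theorem fox_mul_gen (i : ι) (t : K[FreeMonoid ι]) (a : ι) :
    fox i (t * gen a) = if a = i then t else 0 := by
  induction t using MonoidAlgebra.induction_linear with
  | zero => simp
  | add t u ht hu => rw [add_mul, map_add, ht, hu]; split_ifs <;> simp
  | single w c =>
    rw [single_mul_gen, fox_single, foxWord]
    simp [eq_comm]

theorem fox_gen (i a : ι) : fox i (gen a : K[FreeMonoid ι]) = if a = i then 1 else 0 := by
  simpa using fox_mul_gen i 1 a

theorem fox_algebraMap (i : ι) (c : K) : fox i (algebraMap K K[FreeMonoid ι] c) = 0 := by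
  simp [MonoidAlgebra.coe_algebraMap, fox_single, foxWord]

theorem fox_mul (i : ι) (t u : K[FreeMonoid ι]) :
    fox i (t * u) = t * fox i u + augmentation K ι u • fox i t := by
  induction u using induction_gen generalizing t with
  | algebraMap c =>
    rw [← Algebra.commutes, ← Algebra.smul_def, map_smul, fox_algebraMap, mul_zero, zero_add,
      AlgHom.commutes, Algebra.algebraMap_self, RingHom.id_apply]
  | gen a => simp [fox_mul_gen, fox_gen]
  | add u v hu hv => rw [mul_add, map_add, hu, hv, map_add, map_add, mul_add, add_smul]; abel
  | mul u v hu hv =>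
    rw [← mul_assoc, hv, hu, hv u, map_mul]
    simp only [mul_add, mul_smul_comm, mul_assoc]
    module

theorem fox_ofFreeLie_lie (i : ι) (x y : FreeLieAlgebra K ι) :
    fox i (ofFreeLie K ι ⁅x, y⁆) = ofFreeLie K ι x * fox i (ofFreeLie K ι y) -
      ofFreeLie K ι y * fox i (ofFreeLie K ι x) := by
  rw [LieHom.map_lie, Ring.lie_def, map_sub, fox_mul, fox_mul]
  simp

end Fox

section Relators

variable (ρ : ι → FreeLieAlgebra K ι)

local notation "𝔯" => lieSpan K (FreeLieAlgebra K ι) (Set.range ρ)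
local notation "𝔘" => UniversalEnvelopingAlgebra K (FreeLieAlgebra K ι ⧸ 𝔯)

noncomputable def toEnveloping : K[FreeMonoid ι] →ₐ[K] 𝔘 :=
  MonoidAlgebra.lift K 𝔘 (FreeMonoid ι) <| FreeMonoid.lift fun a =>
    UniversalEnvelopingAlgebra.ι K (LieSubmodule.Quotient.mk (FreeLieAlgebra.of K a))

theorem toEnveloping_gen (a : ι) : toEnveloping ρ (gen a) =
    UniversalEnvelopingAlgebra.ι K (LieSubmodule.Quotient.mk (FreeLieAlgebra.of K a)) := by
  simp [toEnveloping]

theorem toEnveloping_ofFreeLie (z : FreeLieAlgebra K ι) :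
    toEnveloping ρ (ofFreeLie K ι z) =
      UniversalEnvelopingAlgebra.ι K (LieSubmodule.Quotient.mk z) := by
  have h : (toEnveloping ρ).toLieHom.comp (ofFreeLie K ι) =
      (UniversalEnvelopingAlgebra.ι K).comp (LieIdeal.quotientMk 𝔯) :=
    FreeLieAlgebra.hom_ext fun a => by simp [toEnveloping_gen]
  exact LieHom.congr_fun h z

theorem toEnveloping_ofFreeLie_of_mem {z : FreeLieAlgebra K ι} (hz : z ∈ 𝔯) :
    toEnveloping ρ (ofFreeLie K ι z) = 0 := by
  rw [toEnveloping_ofFreeLie, (LieSubmodule.Quotient.mk_eq_zero' (N := 𝔯)).mpr hz, map_zero]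

theorem toEnveloping_surjective : Function.Surjective (toEnveloping ρ) := by
  rw [← AlgHom.range_eq_top, eq_top_iff, ← UniversalEnvelopingAlgebra.adjoin_range_ι,
    Algebra.adjoin_le_iff]
  rintro _ ⟨⟨z⟩, rfl⟩
  exact ⟨_, toEnveloping_ofFreeLie ρ z⟩

variable [DecidableEq ι]

noncomputable def foxJacobian : 𝔯 →ₗ[K] (ι → 𝔘) :=
  LinearMap.pi (fun i => (toEnveloping ρ).toLinearMap ∘ₗ fox i ∘ₗ (ofFreeLie K ι).toLinearMap) ∘ₗ
    (𝔯).toSubmodule.subtype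

theorem foxJacobian_apply (r : 𝔯) (i : ι) :
    foxJacobian ρ r i = toEnveloping ρ (fox i (ofFreeLie K ι r)) :=
  rfl

theorem foxJacobian_lie (z : FreeLieAlgebra K ι) (r : 𝔯) :
    foxJacobian ρ (⁅z, r⁆ : 𝔯) =
      UniversalEnvelopingAlgebra.ι K (LieSubmodule.Quotient.mk z : FreeLieAlgebra K ι ⧸ 𝔯) •
        foxJacobian ρ r := by
  funext i
  rw [foxJacobian_apply, LieSubmodule.coe_bracket, fox_ofFreeLie_lie, map_sub, map_mul, map_mul,
    toEnveloping_ofFreeLie_of_mem ρ r.2, zero_mul, sub_zero, toEnveloping_ofFreeLie]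
  rfl

noncomputable def foxAb : LieIdealAb K (FreeLieAlgebra K ι) 𝔯 →ₗ[𝔘] (ι → 𝔘) :=
  LieIdealAb.lift (foxJacobian ρ) (foxJacobian_lie ρ)

end Relators

end FreeMonoidAlgebra

namespace Circuit

open MonoidAlgebra FreeMonoidAlgebra

variable {K ι : Type*} [CommRing K]

noncomputable def relator (π : K) (σ : ι ≃ ι) (k : ι) : FreeLieAlgebra K ι :=
  π • FreeLieAlgebra.of K k + ⁅FreeLieAlgebra.of K k, FreeLieAlgebra.of K (σ k)⁆

theorem ofFreeLie_relator (π : K) (σ : ι ≃ ι) (k : ι) :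
    ofFreeLie K ι (relator π σ k) = π • gen k + gen k * gen (σ k) - gen (σ k) * gen k := by
  rw [relator, map_add, map_smul, LieHom.map_lie, ofFreeLie_of, ofFreeLie_of, Ring.lie_def,
    add_sub_assoc]

variable {π : K} {σ : ι ≃ ι}

local notation "𝔯" => lieSpan K (FreeLieAlgebra K ι) (Set.range (relator π σ))
local notation "𝔘" => UniversalEnvelopingAlgebra K (FreeLieAlgebra K ι ⧸ 𝔯)
local notation "φ" => toEnveloping (relator π σ)

theorem toEnveloping_gen_mul_gen (k : ι) :
    φ (gen k) * φ (gen (σ k)) = φ (gen (σ k)) * φ (gen k) - π • φ (gen k) := by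
  have h := toEnveloping_ofFreeLie_of_mem (relator π σ) (subset_lieSpan (Set.mem_range_self k))
  rw [ofFreeLie_relator, map_sub, map_add, map_smul, map_mul, map_mul] at h
  rw [eq_sub_iff_add_eq, ← sub_eq_zero, ← h]
  abel

variable [DecidableEq ι]

variable (π σ) (P : ι → Prop) [DecidablePred P]

/-- The normal form of `gen j * w` for a normal word `w`: an odd letter `j` (`P j`) is moved to
the right past its even neighbours `σ j` and `σ⁻¹ j` by the relators `relator π σ j` and
`relator π σ (σ⁻¹ j)`. -/
noncomputable def genMulNormal (j : ι) : List ι → K[FreeMonoid ι]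
  | [] => gen j
  | b :: v =>
    if P j ∧ b = σ j then gen b * genMulNormal j v - π • genMulNormal j v
    else if P j ∧ σ b = j then gen b * genMulNormal j v + π • single (.ofList (b :: v)) 1
    else single (.ofList (j :: b :: v)) 1

noncomputable def genOp (j : ι) : Module.End K K[FreeMonoid ι] :=
  Finsupp.linearCombination K (fun w : FreeMonoid ι => genMulNormal π σ P j w.toList) ∘ₗ
    (coeffLinearEquiv K).toLinearMap

noncomputable def rep : K[FreeMonoid ι] →ₐ[K] Module.End K K[FreeMonoid ι] :=
  MonoidAlgebra.lift K _ (FreeMonoid ι) (FreeMonoid.lift (genOp π σ P))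

theorem genOp_single (j : ι) (w : FreeMonoid ι) (c : K) :
    genOp π σ P j (single w c) = c • genMulNormal π σ P j w.toList :=
  Finsupp.linearCombination_single _ _ _

variable {π σ P}

theorem genOp_one (j : ι) : genOp π σ P j 1 = gen j := by
  rw [one_def, genOp_single, one_smul]
  rfl

@[simp]
theorem rep_gen (j : ι) : rep π σ P (gen j) = genOp π σ P j := by
  simp [rep]

theorem genMulNormal_of_not {j : ι} (hj : ¬ P j) (l : List ι) :
    genMulNormal π σ P j l = single (.ofList (j :: l)) 1 := by
  cases l with
  | nil => rfl
  | cons b v => simp [genMulNormal, hj]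

theorem genOp_of_not {j : ι} (hj : ¬ P j) (g : K[FreeMonoid ι]) :
    genOp π σ P j g = gen j * g := by
  induction g using MonoidAlgebra.induction_linear with
  | zero => rw [map_zero, mul_zero]
  | add f g hf hg => rw [map_add, hf, hg, mul_add]
  | single w c =>
    rw [genOp_single, genMulNormal_of_not hj, gen_mul_single, smul_single', mul_one]
    rfl

theorem genOp_relation (hP : ∀ k, P (σ k) ↔ ¬ P k) (hσ : ∀ k, σ (σ k) ≠ k) (k : ι) :
    π • genOp π σ P k + genOp π σ P k * genOp π σ P (σ k) -
      genOp π σ P (σ k) * genOp π σ P k = 0 := by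
  refine MonoidAlgebra.lhom_ext' fun w => LinearMap.ext_ring ?_
  simp only [LinearMap.comp_apply, lsingle_apply, LinearMap.sub_apply, LinearMap.add_apply,
    LinearMap.smul_apply, Module.End.mul_apply, LinearMap.zero_apply]
  by_cases hk : P k
  · have hσk : ¬ P (σ k) := fun h => (hP k).mp h hk
    rw [genOp_of_not hσk, genOp_of_not hσk, gen_mul_single, genOp_single, genOp_single]
    simp only [genMulNormal, FreeMonoid.toList_mul, FreeMonoid.toList_of, List.singleton_append,
      hk, true_and, if_true, one_smul]
    abel
  · have hσk : P (σ k) := (hP k).mpr hk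
    rw [genOp_of_not hk, genOp_of_not hk, gen_mul_single, genOp_single, genOp_single]
    simp only [genMulNormal, FreeMonoid.toList_mul, FreeMonoid.toList_of, List.singleton_append,
      hσk, true_and, if_true, (hσ k).symm, if_false, FreeMonoid.ofList_cons,
      FreeMonoid.ofList_toList, one_smul]
    abel

theorem rep_ofFreeLie_relator (hP : ∀ k, P (σ k) ↔ ¬ P k) (hσ : ∀ k, σ (σ k) ≠ k) (k : ι) :
    rep π σ P (ofFreeLie K ι (relator π σ k)) = 0 := by
  rw [ofFreeLie_relator, map_sub, map_add, map_smul, map_mul, map_mul, rep_gen, rep_gen,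
    genOp_relation hP hσ]

theorem genMulNormal_append_gen (hP : ∀ k, P (σ k) ↔ ¬ P k) {j : ι} (hj : P j) (a : ι)
    (l : List ι) : genMulNormal π σ P a (l ++ [j]) = genMulNormal π σ P a l * gen j := by
  induction l with
  | nil =>
    have h₁ : ¬ (P a ∧ j = σ a) := fun ⟨ha, h⟩ => (hP a).mp (h ▸ hj) ha
    have h₂ : ¬ (P a ∧ σ j = a) := fun ⟨ha, h⟩ => (hP j).mp (h ▸ ha) hj
    simp only [List.nil_append, genMulNormal, h₁, h₂, if_false, gen_mul_single]
    rfl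
  | cons b v ih =>
    simp only [List.cons_append, genMulNormal, ih]
    split_ifs
    · rw [sub_mul, mul_assoc, smul_mul_assoc]
    · rw [add_mul, mul_assoc, smul_mul_assoc, single_mul_gen]
      rfl
    · rw [single_mul_gen]
      rfl

theorem genOp_mul_gen (hP : ∀ k, P (σ k) ↔ ¬ P k) {j : ι} (hj : P j) (a : ι)
    (g : K[FreeMonoid ι]) : genOp π σ P a (g * gen j) = genOp π σ P a g * gen j := by
  induction g using MonoidAlgebra.induction_linear with
  | zero => rw [zero_mul, map_zero, zero_mul]
  | add f g hf hg => rw [add_mul, map_add, map_add, add_mul, hf, hg]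
  | single w c =>
    rw [single_mul_gen, genOp_single, genOp_single, smul_mul_assoc, FreeMonoid.toList_mul,
      FreeMonoid.toList_of, genMulNormal_append_gen hP hj]

theorem rep_mul_gen (hP : ∀ k, P (σ k) ↔ ¬ P k) {j : ι} (hj : P j) (t g : K[FreeMonoid ι]) :
    rep π σ P t (g * gen j) = rep π σ P t g * gen j := by
  induction t using induction_gen generalizing g with
  | algebraMap c =>
    rw [AlgHom.commutes, Module.algebraMap_end_apply, Module.algebraMap_end_apply, smul_mul_assoc]
  | gen a => rw [rep_gen, genOp_mul_gen hP hj]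
  | add t u ht hu => rw [map_add, LinearMap.add_apply, LinearMap.add_apply, ht, hu, add_mul]
  | mul t u ht hu => rw [map_mul (rep π σ P), Module.End.mul_apply, Module.End.mul_apply, hu, ht]

theorem toEnveloping_gen_mul_single (a : ι) (l : List ι) :
    φ (gen a * single (.ofList l) 1) = φ (genMulNormal π σ P a l) := by
  induction l with
  | nil => rw [FreeMonoid.ofList_nil, ← one_def, mul_one]; rfl
  | cons b v ih =>
    rw [FreeMonoid.ofList_cons, ← gen_mul_single, genMulNormal]
    split_ifs with h₁ h₂
    · obtain ⟨-, rfl⟩ := h₁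
      simp only [map_mul, map_sub, map_smul, ← ih]
      rw [← mul_assoc, toEnveloping_gen_mul_gen]
      simp only [sub_mul, smul_mul_assoc, mul_assoc]
    · obtain ⟨-, rfl⟩ := h₂
      rw [FreeMonoid.ofList_cons, ← gen_mul_single]
      simp only [map_mul, map_add, map_smul, ← ih]
      rw [← mul_assoc, sub_eq_iff_eq_add.mp (toEnveloping_gen_mul_gen b).symm]
      simp only [add_mul, smul_mul_assoc, mul_assoc]
    · rw [gen_mul_single, gen_mul_single]
      rfl

theorem toEnveloping_gen_mul (a : ι) (g : K[FreeMonoid ι]) :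
    φ (gen a * g) = φ (genOp π σ P a g) := by
  induction g using MonoidAlgebra.induction_linear with
  | zero => rw [mul_zero, map_zero, map_zero, map_zero]
  | add f g hf hg => rw [mul_add, map_add, hf, hg, map_add, map_add]
  | single w c =>
    rw [genOp_single, map_smul, ← toEnveloping_gen_mul_single, ← map_smul,
      FreeMonoid.ofList_toList, ← mul_smul_comm, smul_single', mul_one]

theorem toEnveloping_mul (t g : K[FreeMonoid ι]) : φ (t * g) = φ (rep π σ P t g) := by
  induction t using induction_gen generalizing g with
  | algebraMap c => rw [← Algebra.smul_def, AlgHom.commutes, Module.algebraMap_end_apply]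
  | gen a => rw [rep_gen, toEnveloping_gen_mul (P := P)]
  | add t u ht hu => rw [add_mul, map_add, ht, hu, map_add, LinearMap.add_apply, map_add]
  | mul t u ht hu =>
    rw [mul_assoc, map_mul, hu, ← map_mul, ht, map_mul (rep π σ P), Module.End.mul_apply]

theorem lieSpan_relator_le_ker_rep (hP : ∀ k, P (σ k) ↔ ¬ P k) (hσ : ∀ k, σ (σ k) ≠ k) :
    𝔯 ≤ ((rep π σ P).toLieHom.comp (ofFreeLie K ι)).ker :=
  lieSpan_le.mpr <| Set.range_subset_iff.mpr fun k =>
    LieHom.mem_ker.mpr (rep_ofFreeLie_relator hP hσ k)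

variable (P) in
noncomputable def envRep (hP : ∀ k, P (σ k) ↔ ¬ P k) (hσ : ∀ k, σ (σ k) ≠ k) :
    𝔘 →ₐ[K] Module.End K K[FreeMonoid ι] :=
  UniversalEnvelopingAlgebra.lift K <|
    LieIdeal.quotientLift 𝔯 _ (lieSpan_relator_le_ker_rep hP hσ)

section EnvRep

variable (hP : ∀ k, P (σ k) ↔ ¬ P k) (hσ : ∀ k, σ (σ k) ≠ k)

theorem envRep_toEnveloping (t : K[FreeMonoid ι]) : envRep P hP hσ (φ t) = rep π σ P t := by
  have h : (envRep P hP hσ).comp φ = rep π σ P :=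
    AlgHom.ext_of_adjoin_eq_top adjoin_range_gen <| by
      rintro _ ⟨a, rfl⟩
      simp [envRep, toEnveloping_gen]
  exact AlgHom.congr_fun h t

theorem toEnveloping_envRep_one (u : 𝔘) : φ (envRep P hP hσ u 1) = u := by
  obtain ⟨t, rfl⟩ := toEnveloping_surjective _ u
  rw [envRep_toEnveloping, ← toEnveloping_mul, mul_one]

theorem envRep_apply_one_injective : Function.Injective fun u : 𝔘 => envRep P hP hσ u 1 :=
  Function.LeftInverse.injective (g := φ) (toEnveloping_envRep_one hP hσ)

theorem envRep_mul_toEnveloping_gen_one {j : ι} (hj : P j) (u : 𝔘) :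
    envRep P hP hσ (u * φ (gen j)) 1 = envRep P hP hσ u 1 * gen j := by
  obtain ⟨t, rfl⟩ := toEnveloping_surjective _ u
  rw [map_mul, Module.End.mul_apply, envRep_toEnveloping, envRep_toEnveloping, rep_gen, genOp_one,
    ← one_mul (gen j), rep_mul_gen hP hj, one_mul]

end EnvRep

theorem isTorsionFree_enveloping (hP : ∀ k, P (σ k) ↔ ¬ P k) (hσ : ∀ k, σ (σ k) ≠ k) :
    Module.IsTorsionFree K 𝔘 :=
  (envRep_apply_one_injective hP hσ).moduleIsTorsionFree _ fun c u => by
    rw [map_smul, LinearMap.smul_apply]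

theorem eq_zero_of_mul_sub_add_mul (hP : ∀ k, P (σ k) ↔ ¬ P k) (hσ : ∀ k, σ (σ k) ≠ k)
    {j l : ι} (hj : P j) (hl : P l) (hjl : j ≠ l) {c d : 𝔘}
    (h : c * (algebraMap K 𝔘 π - φ (gen j)) + d * φ (gen l) = 0) : c = 0 ∧ d = 0 := by
  have h' := congrArg (fun u => envRep P hP hσ u 1) h
  simp only [mul_sub, map_add, map_sub, LinearMap.add_apply, LinearMap.sub_apply,
    ← Algebra.commutes, ← Algebra.smul_def, map_smul, LinearMap.smul_apply, map_zero,
    LinearMap.zero_apply, envRep_mul_toEnveloping_gen_one hP hσ hj,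
    envRep_mul_toEnveloping_gen_one hP hσ hl] at h'
  obtain ⟨hc, hd⟩ := eq_zero_of_smul_sub_mul_gen_add_mul_gen hjl h'
  have h0 : envRep P hP hσ (0 : 𝔘) 1 = 0 := by rw [map_zero, LinearMap.zero_apply]
  exact ⟨envRep_apply_one_injective hP hσ (hc.trans h0.symm),
    envRep_apply_one_injective hP hσ (hd.trans h0.symm)⟩

theorem foxAb_relator (hσ : ∀ k, σ k ≠ k) (k : ι) :
    foxAb (relator π σ) (LieSubmodule.Quotient.mk
      ⟨relator π σ k, subset_lieSpan (Set.mem_range_self k)⟩) =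
      Pi.single k (algebraMap K 𝔘 π - φ (gen (σ k))) + Pi.single (σ k) (φ (gen k)) := by
  funext i
  rw [foxAb, LieIdealAb.lift_mk, foxJacobian_apply, ofFreeLie_relator]
  simp only [map_sub, map_add, map_smul, fox_mul_gen, fox_gen]
  rcases eq_or_ne k i with rfl | hki
  · simp [hσ k, Algebra.algebraMap_eq_smul_one]
  · simp [hki, Pi.single_apply, eq_comm, apply_ite φ]

theorem linearIndependent_relator [Fintype ι] (hP : ∀ k, P (σ k) ↔ ¬ P k)
    (hσ : ∀ k, σ (σ k) ≠ k) :
    LinearIndependent 𝔘 fun k => (LieSubmodule.Quotient.mk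
      ⟨relator π σ k, subset_lieSpan (Set.mem_range_self k)⟩ : LieIdealAb K _ 𝔯) := by
  have hσ₁ (k : ι) : σ k ≠ k := fun h => by simpa [h] using hP k
  refine LinearIndependent.of_comp (foxAb (relator π σ))
    (Fintype.linearIndependent_iff.mpr fun c hc => ?_)
  have key (k : ι) (hk : P k) : c (σ k) = 0 ∧ c k = 0 := by
    have hi := congrFun hc (σ k)
    simp only [Function.comp_apply, foxAb_relator hσ₁, Finset.sum_apply, Pi.smul_apply,
      Pi.add_apply, Pi.single_apply, smul_add, smul_eq_mul, mul_ite, mul_zero,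
      σ.injective.eq_iff, Finset.sum_add_distrib, Finset.sum_ite_eq, Finset.mem_univ, if_true,
      Pi.zero_apply] at hi
    exact eq_zero_of_mul_sub_add_mul hP hσ ((hP (σ k)).mpr fun h => (hP k).mp h hk) hk (hσ k) hi
  intro i
  by_cases hi : P i
  · exact (key i hi).2
  · simpa using (key (σ.symm i) (by simpa [hi] using hP (σ.symm i))).1

theorem isStronglyFree_relator [Fintype ι] (π : K) (σ : ι ≃ ι) (P : ι → Prop) [DecidablePred P]
    (hP : ∀ k, P (σ k) ↔ ¬ P k) (hσ : ∀ k, σ (σ k) ≠ k) :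
    IsStronglyFree K (FreeLieAlgebra K ι) (relator π σ) :=
  have := isTorsionFree_enveloping (π := π) hP hσ
  ⟨Submodule.torsion_eq_bot_of_isTorsionFree,
    .mk (linearIndependent_relator hP hσ) (LieIdealAb.span_range_mk_eq_top _).ge,
    Module.Basis.mk_apply _ _⟩

end Circuit

theorem odd_finRotate_iff {m : ℕ} (hm : Even m) (k : Fin m) :
    Odd (finRotate m k : ℕ) ↔ ¬ Odd (k : ℕ) := by
  obtain ⟨n, rfl⟩ := Nat.exists_eq_succ_of_ne_zero k.pos.ne'
  rw [coe_finRotate]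
  split_ifs with h
  · subst h
    simpa [Nat.not_odd_iff_even] using Nat.even_add_one.mp hm
  · exact Nat.odd_add_one

theorem finRotate_finRotate_ne {m : ℕ} (hm : 3 ≤ m) (k : Fin m) :
    finRotate m (finRotate m k) ≠ k := by
  obtain ⟨n, rfl⟩ : ∃ n, m = n + 1 := ⟨m - 1, by omega⟩
  rw [finRotate_apply, finRotate_apply, add_assoc, Ne, add_eq_left]
  intro h
  have := congrArg Fin.val h
  rw [Fin.val_add, Fin.val_one', Nat.one_mod_eq_one.mpr (by omega), Fin.val_zero,
    Nat.mod_eq_of_lt (by omega)] at this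
  omega

theorem circuit_with_powers_strongly_free_general (p : ℕ)
    (m : ℕ) (hm : 4 ≤ m) (hmeven : Even m)
    (ρ : Fin m → FreeLieAlgebra (Polynomial (ZMod p)) (Fin m))
    (hρ : ∀ k, ρ k =
      (Polynomial.X : Polynomial (ZMod p)) • FreeLieAlgebra.of (Polynomial (ZMod p)) k
      + ⁅FreeLieAlgebra.of (Polynomial (ZMod p)) k,
          FreeLieAlgebra.of (Polynomial (ZMod p)) (finRotate m k)⁆) :
    IsStronglyFree (Polynomial (ZMod p)) (FreeLieAlgebra (Polynomial (ZMod p)) (Fin m)) ρ := by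
  obtain rfl : ρ = Circuit.relator Polynomial.X (finRotate m) := funext hρ
  exact Circuit.isStronglyFree_relator _ _ (fun k => Odd (k : ℕ)) (odd_finRotate_iff hmeven)
    (finRotate_finRotate_ne (by omega))

/-- Let `p` be an odd prime, `R = 𝔽_p[π]`, and `m` even with `m ≥ 4`.  In the free Lie
algebra over `R` on `ξ₁,…,ξ_m`, the sequence
`ρ₁ = π·ξ₁ + [ξ₁,ξ₂], ρ₂ = π·ξ₂ + [ξ₂,ξ₃], …, ρ_{m−1} = π·ξ_{m−1} + [ξ_{m−1},ξ_m],`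
`ρ_m = π·ξ_m + [ξ_m,ξ₁]` (the cyclic successor `i ↦ i + 1` being given by `finRotate m`)
is strongly free over `R`.  (These are the initial forms of the pro-`p` relators
`x₁^p[x₁,x₂], …, x_m^p[x_m,x₁]`.) -/
theorem circuit_with_powers_strongly_free (p : ℕ) (hp : p.Prime) (hodd : Odd p)
    (m : ℕ) (hm : 4 ≤ m) (hmeven : Even m)
    (ρ : Fin m → FreeLieAlgebra (Polynomial (ZMod p)) (Fin m))
    (hρ : ∀ k, ρ k =
      (Polynomial.X : Polynomial (ZMod p)) • FreeLieAlgebra.of (Polynomial (ZMod p)) k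
      + ⁅FreeLieAlgebra.of (Polynomial (ZMod p)) k,
          FreeLieAlgebra.of (Polynomial (ZMod p)) (finRotate m k)⁆) :
    IsStronglyFree (Polynomial (ZMod p)) (FreeLieAlgebra (Polynomial (ZMod p)) (Fin m)) ρ :=
  circuit_with_powers_strongly_free_general p m hm hmeven ρ hρ
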